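/- Let H be an infinite-dimensional complex Hilbert space. For every k ≥ 1 and every k-tuple (A₁,…,Aₖ) of positive definite invertible bounded operators on H, the inductive geometric mean is bounded between the harmonic and arithmetic means: k·(A₁^{−1} + ⋯ + Aₖ^{−1})^{−1} ≤ Gₖ(A₁,…,Aₖ) ≤ (A₁ + ⋯ + Aₖ)/k in the Loewner order. -/

import Mathlib

/-!
Write `B` for the last operator and `t = n/(n+1)`, so that `G_{n+1}(A) = B^{1/2} X^t B^{1/2}` with
`X = G_n(B^{-1/2} A_i B^{-1/2})`. The operator Young inequality `X^t ≤ t X + (1 - t)` (weighted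
AM–GM through the functional calculus), the arithmetic bound for `X` by induction, and
monotonicity of conjugation by `B^{1/2}` give the arithmetic bound. Conjugation and real powers
commute with inversion, so `G(A⁻¹) = G(A)⁻¹`; the harmonic bound is the arithmetic bound for
`A⁻¹`, inverted using that inversion is order-reversing on strictly positive operators.
-/

set_option synthInstance.maxHeartbeats 400000
set_option maxHeartbeats 1000000

noncomputable section

variable {H : Type*} [NormedAddCommGroup H] [InnerProductSpace ℂ H] [CompleteSpace H]

/-- `a` is a positive definite invertible bounded operator. -/
def IsPosDefInv (a : H →L[ℂ] H) : Prop := 0 ≤ a ∧ IsUnit a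

/-- The inductive geometric mean: `indGM k` is the geometric mean `G_{k+1}` of `k+1`
operator variables, defined recursively by `G₁(A) = A` and
`G_{k+1}(A₁,…,A_{k+1}) = A_{k+1}^{1/2} Gₖ(A_{k+1}^{-1/2}A₁A_{k+1}^{-1/2},…,A_{k+1}^{-1/2}AₖA_{k+1}^{-1/2})^{k/(k+1)} A_{k+1}^{1/2}`,
with fractional powers taken via the continuous functional calculus. -/
noncomputable def indGM : (k : ℕ) → (Fin (k + 1) → (H →L[ℂ] H)) → (H →L[ℂ] H)
  | 0, A => A 0
  | (k + 1), A =>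
      CFC.sqrt (A (Fin.last (k + 1))) *
        CFC.rpow
          (indGM k (fun i : Fin (k + 1) =>
            CFC.sqrt (Ring.inverse (A (Fin.last (k + 1)))) * A i.castSucc *
              CFC.sqrt (Ring.inverse (A (Fin.last (k + 1))))))
          ((k + 1 : ℝ) / (k + 2)) *
        CFC.sqrt (A (Fin.last (k + 1)))

open CFC
open scoped Ring

section CStarAlgebra

variable {A : Type*} [CStarAlgebra A] [PartialOrder A] [StarOrderedRing A]

lemma CFC.rpow_le_smul_add_smul_one {a : A} (ha : 0 ≤ a) {t : ℝ} (ht₀ : 0 ≤ t) (ht₁ : t ≤ 1) :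
    a ^ t ≤ t • a + (1 - t) • 1 := by
  have hlin : t • a + (1 - t) • 1 = cfc (fun x : ℝ => t * x + (1 - t)) a := by
    rw [cfc_add_const (1 - t) (t * ·) a, cfc_const_mul_id t a, Algebra.algebraMap_eq_smul_one]
  rw [rpow_eq_cfc_real ha, hlin]
  refine cfc_mono fun x hx => ?_
  have hx₀ : 0 ≤ x := spectrum_nonneg_of_nonneg ha hx
  simpa using Real.geom_mean_le_arith_mean2_weighted ht₀ (sub_nonneg.2 ht₁) hx₀ zero_le_one
    (add_sub_cancel t 1)

lemma CFC.ringInverse_rpow {a : A} (x : ℝ) (ha : IsStrictlyPositive a) :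
    a⁻¹ʳ ^ x = (a ^ x)⁻¹ʳ := by
  rcases eq_or_ne x 0 with rfl | hx
  · simp [rpow_zero _ ha.ringInverse.nonneg, rpow_zero _ ha.nonneg]
  rw [inverse_rpow a x hx, inverse_eq_rpow_neg_one, rpow_rpow a _ _ (by norm_num), neg_one_mul]

end CStarAlgebra

lemma Ring.inverse_smul {𝕜 R : Type*} [Field 𝕜] [Ring R] [Algebra 𝕜 R] (r : 𝕜) (a : R) :
    (r • a)⁻¹ʳ = r⁻¹ • a⁻¹ʳ := by
  rcases eq_or_ne r 0 with rfl | hr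
  · simp
  have hu : IsUnit (algebraMap 𝕜 R r) := (isUnit_iff_ne_zero.2 hr).map _
  have h : (algebraMap 𝕜 R r)⁻¹ʳ = algebraMap 𝕜 R r⁻¹ := by
    simpa using Ring.inverse_unit (Units.map (algebraMap 𝕜 R).toMonoidHom (Units.mk0 r hr))
  rw [Algebra.smul_def, Ring.inverse_mul (.inl hu), h, Algebra.smul_def, Algebra.commutes]

lemma indGM_succ (k : ℕ) (A : Fin (k + 2) → (H →L[ℂ] H)) :
    indGM (k + 1) A = conjSqrt (A (Fin.last _))
      (indGM k (fun i => conjSqrt (A (Fin.last _))⁻¹ʳ (A i.castSucc)) ^ ((k + 1 : ℝ) / (k + 2))) :=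
  rfl

lemma isStrictlyPositive_indGM {k : ℕ} {A : Fin (k + 1) → (H →L[ℂ] H)}
    (hA : ∀ i, IsStrictlyPositive (A i)) : IsStrictlyPositive (indGM k A) := by
  induction k with
  | zero => exact hA 0
  | succ k ih =>
    have hB := hA (Fin.last _)
    rw [indGM_succ, isStrictlyPositive_conjSqrt_iff _ _ hB]
    refine (ih fun i => ?_).rpow _ _
    rw [isStrictlyPositive_conjSqrt_iff _ _ hB.ringInverse]
    exact hA _

lemma indGM_ringInverse (k : ℕ) (A : Fin (k + 1) → (H →L[ℂ] H))
    (hA : ∀ i, IsStrictlyPositive (A i)) :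
    indGM k (fun i => (A i)⁻¹ʳ) = (indGM k A)⁻¹ʳ := by
  induction k with
  | zero => rfl
  | succ k ih =>
    set B := A (Fin.last _)
    have hB : IsStrictlyPositive B := hA _
    have hC : ∀ i : Fin (k + 1), IsStrictlyPositive (conjSqrt B⁻¹ʳ (A i.castSucc)) :=
      fun i => (isStrictlyPositive_conjSqrt_iff _ _ hB.ringInverse).2 (hA _)
    have hC_inv : ∀ i : Fin (k + 1),
        conjSqrt B⁻¹ʳ⁻¹ʳ (A i.castSucc)⁻¹ʳ = (conjSqrt B⁻¹ʳ (A i.castSucc))⁻¹ʳ :=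
      fun i => (ringInverse_conjSqrt _ _ hB.ringInverse).symm
    simp only [indGM_succ, hC_inv, ih _ hC, ringInverse_rpow _ (isStrictlyPositive_indGM hC),
      ringInverse_conjSqrt _ _ hB, B]

lemma indGM_le_smul_sum (k : ℕ) (A : Fin (k + 1) → (H →L[ℂ] H))
    (hA : ∀ i, IsStrictlyPositive (A i)) :
    indGM k A ≤ ((k : ℝ) + 1)⁻¹ • ∑ i, A i := by
  induction k with
  | zero => simp [indGM]
  | succ k ih =>
    set B := A (Fin.last _)
    have hB : IsStrictlyPositive B := hA _
    set C := fun i : Fin (k + 1) => conjSqrt B⁻¹ʳ (A i.castSucc)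
    have hC : ∀ i, IsStrictlyPositive (C i) :=
      fun i => (isStrictlyPositive_conjSqrt_iff _ _ hB.ringInverse).2 (hA _)
    set t : ℝ := (k + 1) / (k + 2) with ht
    have ht₀ : 0 ≤ t := by positivity
    have ht₁ : t ≤ 1 := div_le_one_of_le₀ (by linarith) (by positivity)
    have hweights : t * ((k : ℝ) + 1)⁻¹ = ((k + 1 : ℕ) + 1 : ℝ)⁻¹ ∧
        1 - t = ((k + 1 : ℕ) + 1 : ℝ)⁻¹ := by
      rw [ht]; push_cast; constructor <;> field_simp <;> ring
    calc indGM (k + 1) A = conjSqrt B (indGM k C ^ t) := indGM_succ k A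
      _ ≤ conjSqrt B (t • indGM k C + (1 - t) • 1) := conjSqrt_le_conjSqrt
          (rpow_le_smul_add_smul_one (isStrictlyPositive_indGM hC).nonneg ht₀ ht₁)
      _ ≤ conjSqrt B (t • (((k : ℝ) + 1)⁻¹ • ∑ i, C i) + (1 - t) • 1) := by
        gcongr; exact ih C hC
      _ = ((k + 1 : ℕ) + 1 : ℝ)⁻¹ • (∑ i, conjSqrt B (C i) + conjSqrt B 1) := by
        rw [smul_smul, hweights.1, hweights.2, ← smul_add, map_smul, map_add, map_sum]
      _ = ((k + 1 : ℕ) + 1 : ℝ)⁻¹ • ∑ i, A i := by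
        simp only [C, conjSqrt_conjSqrt_ringInverse _ _ hB, conjSqrt_one B hB.nonneg,
          Fin.sum_univ_castSucc, B]

lemma smul_ringInverse_sum_le_indGM (k : ℕ) (A : Fin (k + 1) → (H →L[ℂ] H))
    (hA : ∀ i, IsStrictlyPositive (A i)) :
    ((k : ℝ) + 1) • (∑ i, (A i)⁻¹ʳ)⁻¹ʳ ≤ indGM k A := by
  have hG := isStrictlyPositive_indGM hA
  have hG_inv : (indGM k A)⁻¹ʳ ≤ ((k : ℝ) + 1)⁻¹ • ∑ i, (A i)⁻¹ʳ := by
    rw [← indGM_ringInverse k A hA]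
    exact indGM_le_smul_sum k _ fun i => (hA i).ringInverse
  calc ((k : ℝ) + 1) • (∑ i, (A i)⁻¹ʳ)⁻¹ʳ = (((k : ℝ) + 1)⁻¹ • ∑ i, (A i)⁻¹ʳ)⁻¹ʳ := by
        rw [Ring.inverse_smul, inv_inv]
    _ ≤ (indGM k A)⁻¹ʳ⁻¹ʳ := CStarAlgebra.ringInverse_le_ringInverse hG_inv hG.ringInverse
    _ = indGM k A := Ring.inverse_inverse hG.isUnit

theorem indGM_harmonic_arithmetic_bounds_general
    (k : ℕ)
    (A : Fin (k + 1) → (H →L[ℂ] H)) (hA : ∀ i, IsPosDefInv (A i)) :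
    ((k : ℝ) + 1) • Ring.inverse (∑ i, Ring.inverse (A i)) ≤ indGM k A ∧
      indGM k A ≤ ((k : ℝ) + 1)⁻¹ • ∑ i, A i :=
  ⟨smul_ringInverse_sum_le_indGM k A hA, indGM_le_smul_sum k A hA⟩

/-- **The harmonic–geometric–arithmetic mean inequality.** The inductive geometric mean is
bounded between the symmetric harmonic and arithmetic means:
`k (A₁⁻¹ + ⋯ + Aₖ⁻¹)⁻¹ ≤ Gₖ(A₁,…,Aₖ) ≤ (A₁ + ⋯ + Aₖ)/k`. -/
theorem indGM_harmonic_arithmetic_bounds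
    (hH : ¬ FiniteDimensional ℂ H) (k : ℕ)
    (A : Fin (k + 1) → (H →L[ℂ] H)) (hA : ∀ i, IsPosDefInv (A i)) :
    ((k : ℝ) + 1) • Ring.inverse (∑ i, Ring.inverse (A i)) ≤ indGM k A ∧
      indGM k A ≤ ((k : ℝ) + 1)⁻¹ • ∑ i, A i :=
  indGM_harmonic_arithmetic_bounds_general k A hA
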